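/- arXiv:1801.03217 — 2 statements merged into one kernel-verified Lean document; each statement's English description precedes it below -/
import Mathlib

section
/- Under criticality (E[ξ]=1, Var(ξ)=2B ∈ (0,∞)), for every λ > 0, lim_{n→∞} Bn (f_n(e^{-λ/(Bn)}) - f_n(0)) = 1/(1+λ), where f_n is the n-th iterate of the offspring generating function. -/
/-!
Write `1 - f(s) = (1 - s) a(s)` and `1 - a(s) = (1 - s) b(s)`. The series `a` and `b` have
nonnegative coefficients, so they are monotone on `[0, 1]` and continuous from the left at `1`,
where `a(1) = f'(1) = 1` and `b(1) = f''(1) / 2 = B`. Then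
`1 / (1 - f(s)) = 1 / (1 - s) + b(s) / a(s)`, and iterating,
`1 / (1 - f_n(s)) = 1 / (1 - s) + ∑_{j<n} (b / a)(f_j(s))`.
Since `f_j(0) ≤ f_j(s)` and `f_j(0) → 1`, the summands lie between `b(f_j(0))` and
`B / a(f_j(0))`, which both tend to `B`; by Cesàro, `1 / (n (1 - f_n(t_n))) → L + B` whenever
`1 / (n (1 - t_n)) → L`. Taking `t_n = 0` (`L = 0`) and `t_n = e^{-λ/(Bn)}` (`L = B/λ`) and
subtracting gives `Bn (f_n(t_n) - f_n(0)) → 1 - λ / (1 + λ) = 1 / (1 + λ)`.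
-/

open MeasureTheory Filter Topology Asymptotics Real

/-- Probability generating function of the offspring distribution `p`. -/
noncomputable def pgf (p : ℕ → ℝ) (s : ℝ) : ℝ := ∑' k, p k * s ^ k

/-- `n`-th functional iterate of the offspring generating function. -/
noncomputable def pgfIter (p : ℕ → ℝ) : ℕ → ℝ → ℝ
  | 0 => fun s => s
  | n + 1 => fun s => pgf p (pgfIter p n s)

open Finset

lemma hasSum_of_tsum_eq_of_ne_zero {ι α : Type*} [AddCommMonoid α] [TopologicalSpace α]
    {f : ι → α} {a : α} (h : ∑' i, f i = a) (ha : a ≠ 0) : HasSum f a := by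
  by_cases hf : Summable f
  · exact h ▸ hf.hasSum
  · rw [tsum_eq_zero_of_not_summable hf] at h
    exact absurd h.symm ha

lemma tendsto_natCast_mul_one_sub_exp_neg_div {c : ℝ} (hc : c ≠ 0) :
    Tendsto (fun n : ℕ => (n : ℝ) * (1 - exp (-c / n))) atTop (𝓝 c) := by
  have hx : Tendsto (fun n : ℕ => -c / n) atTop (𝓝[≠] 0) := by
    refine tendsto_nhdsWithin_of_tendsto_nhds_of_eventually_within _
      (tendsto_const_nhds.div_atTop tendsto_natCast_atTop_atTop) ?_
    filter_upwards [eventually_ne_atTop 0] with n hn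
    simpa [hn] using hc
  have h := ((Real.hasDerivAt_exp 0).tendsto_slope_zero.comp hx).const_mul c
  simp only [exp_zero, zero_add, mul_one] at h
  refine h.congr' ?_
  filter_upwards [eventually_ne_atTop 0] with n hn
  simp only [Function.comp_apply, smul_eq_mul]
  field_simp
  ring

section WeightedSeries

variable {p : ℕ → ℝ} {q : ℕ → ℝ → ℝ}

lemma summable_mul_of_monotoneOn (hp : ∀ k, 0 ≤ p k) (hq : ∀ k, MonotoneOn (q k) (Set.Icc 0 1))
    (hq0 : ∀ k s, 0 ≤ s → 0 ≤ q k s) (h1 : Summable fun k => p k * q k 1) {s : ℝ}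
    (hs : s ∈ Set.Icc 0 1) : Summable fun k => p k * q k s :=
  h1.of_nonneg_of_le (fun k => mul_nonneg (hp k) (hq0 k s hs.1))
    fun k => mul_le_mul_of_nonneg_left (hq k hs (Set.right_mem_Icc.2 zero_le_one) hs.2) (hp k)

lemma monotoneOn_tsum_mul (hp : ∀ k, 0 ≤ p k) (hq : ∀ k, MonotoneOn (q k) (Set.Icc 0 1))
    (hq0 : ∀ k s, 0 ≤ s → 0 ≤ q k s) (h1 : Summable fun k => p k * q k 1) :
    MonotoneOn (fun s => ∑' k, p k * q k s) (Set.Icc 0 1) := fun _ hs _ ht hst =>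
  (summable_mul_of_monotoneOn hp hq hq0 h1 hs).tsum_le_tsum
    (fun k => mul_le_mul_of_nonneg_left (hq k hs ht hst) (hp k))
    (summable_mul_of_monotoneOn hp hq hq0 h1 ht)

lemma tendsto_tsum_mul_nhdsWithin_Icc (hp : ∀ k, 0 ≤ p k)
    (hq : ∀ k, MonotoneOn (q k) (Set.Icc 0 1)) (hq0 : ∀ k s, 0 ≤ s → 0 ≤ q k s)
    (h1 : Summable fun k => p k * q k 1) (hc : ∀ k, ContinuousWithinAt (q k) (Set.Icc 0 1) 1) :
    Tendsto (fun s => ∑' k, p k * q k s) (𝓝[Set.Icc 0 1] 1) (𝓝 (∑' k, p k * q k 1)) := by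
  refine tendsto_tsum_of_dominated_convergence h1 (fun k => (hc k).tendsto.const_mul (p k)) ?_
  filter_upwards [self_mem_nhdsWithin] with s hs k
  rw [Real.norm_of_nonneg (mul_nonneg (hp k) (hq0 k s hs.1))]
  exact mul_le_mul_of_nonneg_left (hq k hs (Set.right_mem_Icc.2 zero_le_one) hs.2) (hp k)

lemma tsum_mul_zero_pos_of_tsum_mul_one_pos (hp : ∀ k, 0 ≤ p k)
    (hq : ∀ k, MonotoneOn (q k) (Set.Icc 0 1)) (hq0 : ∀ k s, 0 ≤ s → 0 ≤ q k s)
    (h1 : Summable fun k => p k * q k 1) (hpos : 0 < ∑' k, p k * q k 1)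
    (hsupp : ∀ k, 0 < q k 1 → 0 < q k 0) :
    0 < ∑' k, p k * q k 0 := by
  obtain ⟨k, hk⟩ : ∃ k, p k * q k 1 ≠ 0 := by
    by_contra! h
    simp [h] at hpos
  have hpk : 0 < p k := (hp k).lt_of_ne fun h => hk (by rw [← h, zero_mul])
  have hqk : 0 < q k 1 := (hq0 k 1 zero_le_one).lt_of_ne fun h => hk (by rw [← h, mul_zero])
  exact (summable_mul_of_monotoneOn hp hq hq0 h1 (Set.left_mem_Icc.2 zero_le_one)).tsum_pos
    (fun j => mul_nonneg (hp j) (hq0 j 0 le_rfl)) k (mul_pos hpk (hsupp k hqk))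

lemma tsum_mul_sub_tsum_mul {r : ℕ → ℝ} {x y : ℝ} (hx : Summable fun k => p k * q k x)
    (hy : Summable fun k => p k * q k y) (hr : ∀ k, q k x - q k y = (x - y) * r k) :
    ∑' k, p k * q k x - ∑' k, p k * q k y = (x - y) * ∑' k, p k * r k := by
  rw [← hx.tsum_sub hy, ← tsum_mul_left]
  exact tsum_congr fun k => by linear_combination p k * hr k

end WeightedSeries

lemma monotoneOn_geom_sum (k : ℕ) :
    MonotoneOn (fun s : ℝ => ∑ i ∈ range k, s ^ i) (Set.Icc 0 1) :=
  fun _ hs _ _ hst => sum_le_sum fun i _ => pow_le_pow_left₀ hs.1 hst i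

lemma monotoneOn_sum_geom_sum (k : ℕ) :
    MonotoneOn (fun s : ℝ => ∑ i ∈ range k, ∑ j ∈ range i, s ^ j) (Set.Icc 0 1) :=
  fun _ hs _ ht hst => sum_le_sum fun i _ => monotoneOn_geom_sum i hs ht hst

lemma sum_range_geom_sum_one (k : ℕ) :
    ∑ i ∈ range k, ∑ j ∈ range i, (1 : ℝ) ^ j = ((k : ℝ) ^ 2 - k) / 2 := by
  induction k with
  | zero => simp
  | succ k ih => rw [sum_range_succ, ih]; simp; ring

/-- `a(s) = (1 - f(s)) / (1 - s)`, written as a series so that `a(1) = f'(1)`. -/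
noncomputable def pgfDivDiff (p : ℕ → ℝ) (s : ℝ) : ℝ :=
  ∑' k, p k * ∑ i ∈ range k, s ^ i

/-- `b(s) = (1 - a(s)) / (1 - s)`, written as a series so that `b(1) = f''(1) / 2`. -/
noncomputable def pgfDivDiff₂ (p : ℕ → ℝ) (s : ℝ) : ℝ :=
  ∑' k, p k * ∑ i ∈ range k, ∑ j ∈ range i, s ^ j

noncomputable def pgfRecipIncrement (p : ℕ → ℝ) (s : ℝ) : ℝ :=
  pgfDivDiff₂ p s / pgfDivDiff p s

section Offspring

variable {p : ℕ → ℝ} {B s t : ℝ}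

lemma hasSum_pgf_one (hsum : HasSum p 1) : HasSum (fun k => p k * (1 : ℝ) ^ k) 1 := by
  simpa using hsum

lemma hasSum_pgfDivDiff_one (hmean : HasSum (fun k : ℕ => (k : ℝ) * p k) 1) :
    HasSum (fun k => p k * ∑ i ∈ range k, (1 : ℝ) ^ i) 1 := by
  simpa [mul_comm] using hmean

lemma hasSum_pgfDivDiff₂_one (hmean : HasSum (fun k : ℕ => (k : ℝ) * p k) 1)
    (hvar : HasSum (fun k : ℕ => (k : ℝ) ^ 2 * p k) (2 * B + 1)) :
    HasSum (fun k => p k * ∑ i ∈ range k, ∑ j ∈ range i, (1 : ℝ) ^ j) B := by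
  have hterm : (fun k => p k * ∑ i ∈ range k, ∑ j ∈ range i, (1 : ℝ) ^ j)
      = fun k : ℕ => ((k : ℝ) ^ 2 * p k - k * p k) / 2 := by
    funext k
    rw [sum_range_geom_sum_one]
    ring
  rw [hterm, show B = (2 * B + 1 - 1) / 2 by ring]
  exact (hvar.sub hmean).div_const 2

lemma one_sub_pgf_eq (hp : ∀ k, 0 ≤ p k) (hsum : HasSum p 1) (hs : s ∈ Set.Icc 0 1) :
    1 - pgf p s = (1 - s) * pgfDivDiff p s := by
  have h := tsum_mul_sub_tsum_mul (q := fun k (s : ℝ) => s ^ k)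
    (r := fun k => ∑ i ∈ range k, s ^ i) (hasSum_pgf_one hsum).summable
    (summable_mul_of_monotoneOn hp (fun k _ hs _ _ hst => pow_le_pow_left₀ hs.1 hst k)
      (fun k _ hs => pow_nonneg hs k) (hasSum_pgf_one hsum).summable hs)
    fun k => by rw [one_pow, mul_neg_geom_sum]
  rwa [(hasSum_pgf_one hsum).tsum_eq] at h

lemma summable_pgfDivDiff (hp : ∀ k, 0 ≤ p k) (hmean : HasSum (fun k : ℕ => (k : ℝ) * p k) 1)
    (hs : s ∈ Set.Icc 0 1) : Summable fun k => p k * ∑ i ∈ range k, s ^ i :=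
  summable_mul_of_monotoneOn hp (q := fun k s => ∑ i ∈ range k, s ^ i) monotoneOn_geom_sum
    (fun k s hs => by positivity) (hasSum_pgfDivDiff_one hmean).summable hs

lemma one_sub_pgfDivDiff_eq (hp : ∀ k, 0 ≤ p k) (hmean : HasSum (fun k : ℕ => (k : ℝ) * p k) 1)
    (hs : s ∈ Set.Icc 0 1) : 1 - pgfDivDiff p s = (1 - s) * pgfDivDiff₂ p s := by
  have h := tsum_mul_sub_tsum_mul (q := fun k (s : ℝ) => ∑ i ∈ range k, s ^ i)
    (r := fun k => ∑ i ∈ range k, ∑ j ∈ range i, s ^ j)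
    (summable_pgfDivDiff hp hmean (Set.right_mem_Icc.2 zero_le_one))
    (summable_pgfDivDiff hp hmean hs) fun k => by
      rw [← sum_sub_distrib, mul_sum]
      exact sum_congr rfl fun i _ => by rw [one_pow, mul_neg_geom_sum]
  rwa [(hasSum_pgfDivDiff_one hmean).tsum_eq] at h

lemma monotoneOn_pgfDivDiff (hp : ∀ k, 0 ≤ p k)
    (hmean : HasSum (fun k : ℕ => (k : ℝ) * p k) 1) : MonotoneOn (pgfDivDiff p) (Set.Icc 0 1) :=
  monotoneOn_tsum_mul hp (q := fun k s => ∑ i ∈ range k, s ^ i) monotoneOn_geom_sum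
    (fun k s hs => by positivity) (hasSum_pgfDivDiff_one hmean).summable

lemma monotoneOn_pgfDivDiff₂ (hp : ∀ k, 0 ≤ p k) (hmean : HasSum (fun k : ℕ => (k : ℝ) * p k) 1)
    (hvar : HasSum (fun k : ℕ => (k : ℝ) ^ 2 * p k) (2 * B + 1)) :
    MonotoneOn (pgfDivDiff₂ p) (Set.Icc 0 1) :=
  monotoneOn_tsum_mul hp (q := fun k s => ∑ i ∈ range k, ∑ j ∈ range i, s ^ j)
    monotoneOn_sum_geom_sum (fun k s hs => by positivity)
    (hasSum_pgfDivDiff₂_one hmean hvar).summable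

lemma tendsto_pgfDivDiff (hp : ∀ k, 0 ≤ p k) (hmean : HasSum (fun k : ℕ => (k : ℝ) * p k) 1) :
    Tendsto (pgfDivDiff p) (𝓝[Set.Icc 0 1] 1) (𝓝 1) := by
  have h := tendsto_tsum_mul_nhdsWithin_Icc hp (q := fun k s => ∑ i ∈ range k, s ^ i)
    monotoneOn_geom_sum (fun k s hs => by positivity) (hasSum_pgfDivDiff_one hmean).summable
    fun k => (continuous_finsetSum _ fun i _ => continuous_pow i).continuousWithinAt
  rwa [(hasSum_pgfDivDiff_one hmean).tsum_eq] at h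

lemma tendsto_pgfDivDiff₂ (hp : ∀ k, 0 ≤ p k) (hmean : HasSum (fun k : ℕ => (k : ℝ) * p k) 1)
    (hvar : HasSum (fun k : ℕ => (k : ℝ) ^ 2 * p k) (2 * B + 1)) :
    Tendsto (pgfDivDiff₂ p) (𝓝[Set.Icc 0 1] 1) (𝓝 B) := by
  have h := tendsto_tsum_mul_nhdsWithin_Icc hp
    (q := fun k s => ∑ i ∈ range k, ∑ j ∈ range i, s ^ j) monotoneOn_sum_geom_sum
    (fun k s hs => by positivity) (hasSum_pgfDivDiff₂_one hmean hvar).summable fun k =>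
      (continuous_finsetSum _ fun i _ =>
        continuous_finsetSum _ fun j _ => continuous_pow j).continuousWithinAt
  rwa [(hasSum_pgfDivDiff₂_one hmean hvar).tsum_eq] at h

lemma pgfDivDiff_pos (hp : ∀ k, 0 ≤ p k) (hmean : HasSum (fun k : ℕ => (k : ℝ) * p k) 1)
    (hs : s ∈ Set.Icc 0 1) : 0 < pgfDivDiff p s := by
  have h0 : 0 < pgfDivDiff p 0 := by
    refine tsum_mul_zero_pos_of_tsum_mul_one_pos hp (q := fun k s => ∑ i ∈ range k, s ^ i)
      monotoneOn_geom_sum (fun k s hs => by positivity) (hasSum_pgfDivDiff_one hmean).summable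
      (by rw [(hasSum_pgfDivDiff_one hmean).tsum_eq]; exact one_pos) fun k hk => ?_
    rcases k with _ | k
    · simp at hk
    · simp [sum_range_succ']
  exact h0.trans_le (monotoneOn_pgfDivDiff hp hmean (Set.left_mem_Icc.2 zero_le_one) hs hs.1)

lemma pgfDivDiff₂_zero_pos (hp : ∀ k, 0 ≤ p k) (hmean : HasSum (fun k : ℕ => (k : ℝ) * p k) 1)
    (hvar : HasSum (fun k : ℕ => (k : ℝ) ^ 2 * p k) (2 * B + 1)) (hB : 0 < B) :
    0 < pgfDivDiff₂ p 0 := by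
  -- `b(1) = B > 0` needs `p k > 0` for some `k ≥ 2`, and that term is already positive at `0`.
  refine tsum_mul_zero_pos_of_tsum_mul_one_pos hp
    (q := fun k s => ∑ i ∈ range k, ∑ j ∈ range i, s ^ j) monotoneOn_sum_geom_sum
    (fun k s hs => by positivity) (hasSum_pgfDivDiff₂_one hmean hvar).summable
    (by rw [(hasSum_pgfDivDiff₂_one hmean hvar).tsum_eq]; exact hB) fun k hk => ?_
  rcases k with _ | _ | k
  · simp at hk
  · simp at hk
  · simp [sum_range_succ']
    positivity

lemma pgfDivDiff_le_one (hp : ∀ k, 0 ≤ p k) (hmean : HasSum (fun k : ℕ => (k : ℝ) * p k) 1)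
    (hs : s ∈ Set.Icc 0 1) : pgfDivDiff p s ≤ 1 :=
  (monotoneOn_pgfDivDiff hp hmean hs (Set.right_mem_Icc.2 zero_le_one) hs.2).trans_eq
    (hasSum_pgfDivDiff_one hmean).tsum_eq

lemma pgfDivDiff₂_le (hp : ∀ k, 0 ≤ p k) (hmean : HasSum (fun k : ℕ => (k : ℝ) * p k) 1)
    (hvar : HasSum (fun k : ℕ => (k : ℝ) ^ 2 * p k) (2 * B + 1)) (hs : s ∈ Set.Icc 0 1) :
    pgfDivDiff₂ p s ≤ B :=
  (monotoneOn_pgfDivDiff₂ hp hmean hvar hs (Set.right_mem_Icc.2 zero_le_one) hs.2).trans_eq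
    (hasSum_pgfDivDiff₂_one hmean hvar).tsum_eq

lemma pgfDivDiff₂_nonneg (hp : ∀ k, 0 ≤ p k) (hs : 0 ≤ s) : 0 ≤ pgfDivDiff₂ p s :=
  tsum_nonneg fun k => mul_nonneg (hp k) (by positivity)

lemma pgf_nonneg (hp : ∀ k, 0 ≤ p k) (hs : 0 ≤ s) : 0 ≤ pgf p s :=
  tsum_nonneg fun k => mul_nonneg (hp k) (pow_nonneg hs k)

lemma mapsTo_pgf (hp : ∀ k, 0 ≤ p k) (hsum : HasSum p 1)
    (hmean : HasSum (fun k : ℕ => (k : ℝ) * p k) 1) :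
    Set.MapsTo (pgf p) (Set.Ico 0 1) (Set.Ico 0 1) := fun _ hs => by
  have h := one_sub_pgf_eq hp hsum (Set.Ico_subset_Icc_self hs)
  have ha := mul_pos (sub_pos.2 hs.2) (pgfDivDiff_pos hp hmean (Set.Ico_subset_Icc_self hs))
  exact ⟨pgf_nonneg hp hs.1, by linarith⟩

lemma monotoneOn_pgf (hp : ∀ k, 0 ≤ p k) (hsum : HasSum p 1) :
    MonotoneOn (pgf p) (Set.Icc 0 1) :=
  monotoneOn_tsum_mul hp (q := fun k (s : ℝ) => s ^ k)
    (fun k _ hs _ _ hst => pow_le_pow_left₀ hs.1 hst k) (fun k _ hs => pow_nonneg hs k)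
    (hasSum_pgf_one hsum).summable

lemma pgfIter_eq_iterate (p : ℕ → ℝ) (n : ℕ) : pgfIter p n = (pgf p)^[n] := by
  induction n with
  | zero => rfl
  | succ n ih => funext s; rw [Function.iterate_succ_apply', ← ih]; rfl

lemma pgfIter_mem_Ico (hp : ∀ k, 0 ≤ p k) (hsum : HasSum p 1)
    (hmean : HasSum (fun k : ℕ => (k : ℝ) * p k) 1) (hs : s ∈ Set.Ico 0 1) (n : ℕ) :
    pgfIter p n s ∈ Set.Ico 0 1 := by
  rw [pgfIter_eq_iterate]
  exact (mapsTo_pgf hp hsum hmean).iterate n hs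

lemma pgfIter_mono (hp : ∀ k, 0 ≤ p k) (hsum : HasSum p 1)
    (hmean : HasSum (fun k : ℕ => (k : ℝ) * p k) 1) (hs : s ∈ Set.Ico 0 1)
    (ht : t ∈ Set.Ico 0 1) (hst : s ≤ t) (n : ℕ) : pgfIter p n s ≤ pgfIter p n t := by
  induction n with
  | zero => exact hst
  | succ n ih =>
    exact monotoneOn_pgf hp hsum (Set.Ico_subset_Icc_self (pgfIter_mem_Ico hp hsum hmean hs n))
      (Set.Ico_subset_Icc_self (pgfIter_mem_Ico hp hsum hmean ht n)) ih

lemma inv_one_sub_pgf (hp : ∀ k, 0 ≤ p k) (hsum : HasSum p 1)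
    (hmean : HasSum (fun k : ℕ => (k : ℝ) * p k) 1) (hs : s ∈ Set.Ico 0 1) :
    (1 - pgf p s)⁻¹ = (1 - s)⁻¹ + pgfRecipIncrement p s := by
  have hs' := Set.Ico_subset_Icc_self hs
  have ha := pgfDivDiff_pos hp hmean hs'
  have h1s : 1 - s ≠ 0 := (sub_pos.2 hs.2).ne'
  rw [one_sub_pgf_eq hp hsum hs', pgfRecipIncrement]
  field_simp
  linear_combination one_sub_pgfDivDiff_eq hp hmean hs'

lemma inv_one_sub_pgfIter (hp : ∀ k, 0 ≤ p k) (hsum : HasSum p 1)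
    (hmean : HasSum (fun k : ℕ => (k : ℝ) * p k) 1) (hs : s ∈ Set.Ico 0 1) (n : ℕ) :
    (1 - pgfIter p n s)⁻¹ = (1 - s)⁻¹ + ∑ j ∈ range n, pgfRecipIncrement p (pgfIter p j s) := by
  induction n with
  | zero => simp [pgfIter]
  | succ n ih =>
    rw [sum_range_succ, ← add_assoc, ← ih]
    exact inv_one_sub_pgf hp hsum hmean (pgfIter_mem_Ico hp hsum hmean hs n)

lemma pgfRecipIncrement_mem_Icc (hp : ∀ k, 0 ≤ p k) (hsum : HasSum p 1)
    (hmean : HasSum (fun k : ℕ => (k : ℝ) * p k) 1)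
    (hvar : HasSum (fun k : ℕ => (k : ℝ) ^ 2 * p k) (2 * B + 1)) (hs : s ∈ Set.Ico 0 1) (j : ℕ) :
    pgfRecipIncrement p (pgfIter p j s) ∈
      Set.Icc (pgfDivDiff₂ p (pgfIter p j 0)) (B / pgfDivDiff p (pgfIter p j 0)) := by
  have h0 := Set.Ico_subset_Icc_self (pgfIter_mem_Ico hp hsum hmean ⟨le_rfl, zero_lt_one⟩ j)
  have hs' := Set.Ico_subset_Icc_self (pgfIter_mem_Ico hp hsum hmean hs j)
  have hle := pgfIter_mono hp hsum hmean ⟨le_rfl, zero_lt_one⟩ hs hs.1 j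
  constructor
  · calc pgfDivDiff₂ p (pgfIter p j 0) ≤ pgfDivDiff₂ p (pgfIter p j s) :=
          monotoneOn_pgfDivDiff₂ hp hmean hvar h0 hs' hle
      _ ≤ pgfRecipIncrement p (pgfIter p j s) :=
          le_div_self (pgfDivDiff₂_nonneg hp hs'.1) (pgfDivDiff_pos hp hmean hs')
            (pgfDivDiff_le_one hp hmean hs')
  · exact div_le_div₀ ((pgfDivDiff₂_nonneg hp hs'.1).trans (pgfDivDiff₂_le hp hmean hvar hs'))
      (pgfDivDiff₂_le hp hmean hvar hs') (pgfDivDiff_pos hp hmean h0)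
      (monotoneOn_pgfDivDiff hp hmean h0 hs' hle)

/-- Each iteration adds at least `b(0) > 0` to `1 / (1 - f_n(0))`. -/
lemma tendsto_pgfIter_zero (hp : ∀ k, 0 ≤ p k) (hsum : HasSum p 1)
    (hmean : HasSum (fun k : ℕ => (k : ℝ) * p k) 1)
    (hvar : HasSum (fun k : ℕ => (k : ℝ) ^ 2 * p k) (2 * B + 1)) (hB : 0 < B) :
    Tendsto (fun n => pgfIter p n 0) atTop (𝓝 1) := by
  have h0 : (0 : ℝ) ∈ Set.Ico 0 1 := ⟨le_rfl, zero_lt_one⟩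
  have hstep : ∀ j, pgfDivDiff₂ p 0 ≤ pgfRecipIncrement p (pgfIter p j 0) := fun j => by
    have hj := pgfIter_mem_Ico hp hsum hmean h0 j
    exact (monotoneOn_pgfDivDiff₂ hp hmean hvar (Set.Ico_subset_Icc_self h0)
      (Set.Ico_subset_Icc_self hj) hj.1).trans (pgfRecipIncrement_mem_Icc hp hsum hmean hvar h0 j).1
  have hlow : ∀ n : ℕ, n * pgfDivDiff₂ p 0 ≤ (1 - pgfIter p n 0)⁻¹ := fun n => by
    have h := card_nsmul_le_sum (range n) _ _ fun j _ => hstep j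
    rw [card_range, nsmul_eq_mul] at h
    rw [inv_one_sub_pgfIter hp hsum hmean h0, sub_zero, inv_one]
    linarith
  have hinv : Tendsto (fun n => (1 - pgfIter p n 0)⁻¹) atTop atTop :=
    tendsto_atTop_mono hlow <| tendsto_natCast_atTop_atTop.atTop_mul_const
      (pgfDivDiff₂_zero_pos hp hmean hvar hB)
  have h := tendsto_const_nhds (x := (1 : ℝ)).sub hinv.inv_tendsto_atTop
  simpa using h

lemma tendsto_cesaro_pgfRecipIncrement (hp : ∀ k, 0 ≤ p k) (hsum : HasSum p 1)
    (hmean : HasSum (fun k : ℕ => (k : ℝ) * p k) 1)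
    (hvar : HasSum (fun k : ℕ => (k : ℝ) ^ 2 * p k) (2 * B + 1)) (hB : 0 < B) {t : ℕ → ℝ}
    (ht : ∀ᶠ n in atTop, t n ∈ Set.Ico 0 1) :
    Tendsto (fun n : ℕ => (n : ℝ)⁻¹ * ∑ j ∈ range n, pgfRecipIncrement p (pgfIter p j (t n)))
      atTop (𝓝 B) := by
  have hq : Tendsto (fun j => pgfIter p j 0) atTop (𝓝[Set.Icc 0 1] 1) :=
    tendsto_nhdsWithin_iff.2 ⟨tendsto_pgfIter_zero hp hsum hmean hvar hB, .of_forall fun j =>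
      Set.Ico_subset_Icc_self (pgfIter_mem_Ico hp hsum hmean ⟨le_rfl, zero_lt_one⟩ j)⟩
  have hlo := ((tendsto_pgfDivDiff₂ hp hmean hvar).comp hq).cesaro
  have hhi := ((tendsto_const_nhds (x := B)).div ((tendsto_pgfDivDiff hp hmean).comp hq)
    one_ne_zero).cesaro
  rw [div_one] at hhi
  refine tendsto_of_tendsto_of_tendsto_of_le_of_le' hlo hhi ?_ ?_
  · filter_upwards [ht] with n htn
    gcongr with j
    exact (pgfRecipIncrement_mem_Icc hp hsum hmean hvar htn j).1
  · filter_upwards [ht] with n htn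
    gcongr with j
    exact (pgfRecipIncrement_mem_Icc hp hsum hmean hvar htn j).2

lemma tendsto_inv_mul_one_sub_pgfIter (hp : ∀ k, 0 ≤ p k) (hsum : HasSum p 1)
    (hmean : HasSum (fun k : ℕ => (k : ℝ) * p k) 1)
    (hvar : HasSum (fun k : ℕ => (k : ℝ) ^ 2 * p k) (2 * B + 1)) (hB : 0 < B) {t : ℕ → ℝ}
    {L : ℝ} (ht : ∀ᶠ n in atTop, t n ∈ Set.Ico 0 1)
    (hL : Tendsto (fun n : ℕ => ((n : ℝ) * (1 - t n))⁻¹) atTop (𝓝 L)) :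
    Tendsto (fun n : ℕ => ((n : ℝ) * (1 - pgfIter p n (t n)))⁻¹) atTop (𝓝 (L + B)) := by
  refine (hL.add (tendsto_cesaro_pgfRecipIncrement hp hsum hmean hvar hB ht)).congr' ?_
  filter_upwards [ht] with n htn
  rw [mul_inv, mul_inv, inv_one_sub_pgfIter hp hsum hmean htn, mul_add]

end Offspring

theorem yaglom_laplace_transform_general    (p : ℕ → ℝ) (hp0 : ∀ k, 0 ≤ p k) (hp1 : ∑' k, p k = 1)
    (hmean : ∑' k : ℕ, (k : ℝ) * p k = 1) (B : ℝ) (hB : 0 < B)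
    (hvar : (∑' k : ℕ, (k : ℝ) ^ 2 * p k) - 1 = 2 * B) :
    ∀ lam : ℝ, 0 < lam →
      Tendsto (fun n : ℕ =>
          B * n * (pgfIter p n (Real.exp (-lam / (B * n))) - pgfIter p n 0))
        atTop (𝓝 (1 / (1 + lam))) := by
  intro lam hlam
  have hsum := hasSum_of_tsum_eq_of_ne_zero hp1 one_ne_zero
  have hmean' := hasSum_of_tsum_eq_of_ne_zero hmean one_ne_zero
  have hvar' : HasSum (fun k : ℕ => (k : ℝ) ^ 2 * p k) (2 * B + 1) :=
    hasSum_of_tsum_eq_of_ne_zero (by linarith) (by positivity)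
  set t : ℕ → ℝ := fun n => exp (-(lam / B) / n)
  have ht : ∀ᶠ n in atTop, t n ∈ Set.Ico 0 1 := by
    filter_upwards [eventually_gt_atTop 0] with n hn
    exact ⟨(exp_pos _).le, exp_lt_one_iff.2 (by simp only [neg_div, neg_lt_zero]; positivity)⟩
  have hL : Tendsto (fun n : ℕ => ((n : ℝ) * (1 - t n))⁻¹) atTop (𝓝 (lam / B)⁻¹) :=
    (tendsto_natCast_mul_one_sub_exp_neg_div (div_pos hlam hB).ne').inv₀ (div_pos hlam hB).ne'
  have h0 : Tendsto (fun n : ℕ => ((n : ℝ) * (1 - 0))⁻¹) atTop (𝓝 0) := by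
    simpa using tendsto_inv_atTop_nhds_zero_nat
  have hlim := ((tendsto_inv_mul_one_sub_pgfIter hp0 hsum hmean' hvar' hB
    (.of_forall fun _ => ⟨le_rfl, zero_lt_one⟩) h0).inv₀ (by positivity)).sub
    ((tendsto_inv_mul_one_sub_pgfIter hp0 hsum hmean' hvar' hB ht hL).inv₀ (by positivity))
  convert hlim.const_mul B using 2 with n
  · simp only [t, inv_inv, neg_div, div_div]
    ring
  · field_simp
    ring

theorem yaglom_laplace_transform    (p : ℕ → ℝ) (hp0 : ∀ k, 0 ≤ p k) (hp1 : ∑' k, p k = 1)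
    (hmean : ∑' k : ℕ, (k : ℝ) * p k = 1) (B : ℝ) (hB : 0 < B)
    (hsq : Summable fun k : ℕ => (k : ℝ) ^ 2 * p k)
    (hvar : (∑' k : ℕ, (k : ℝ) ^ 2 * p k) - 1 = 2 * B) :
    ∀ lam : ℝ, 0 < lam →
      Tendsto (fun n : ℕ =>
          B * n * (pgfIter p n (Real.exp (-lam / (B * n))) - pgfIter p n 0))
        atTop (𝓝 (1 / (1 + lam))) :=
  yaglom_laplace_transform_general p hp0 hp1 hmean B hB hvar
end

section
/- Assume g.c.d.{k : f_k > 0} = 1, E[ξ]=1, Var(ξ)=2B ∈ (0,∞), and the local limit theorem: lim n²B²(1 + 1/(Bn))^{k+1} P(Z(n)=k) = 1 uniformly for k/n bounded. Then for φ(n) → ∞ with φ(n) = o(n), P(0 < Z(n) ≤ Bφ(n)) ~ φ(n)/(n²B) as n → ∞. -/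
open MeasureTheory Filter Topology Asymptotics Real

/-!
By the local limit theorem, uniformly for `1 ≤ k ≤ n`,
`P(Z(n) = k) = (1 + o(1)) q_n ^ (k + 1) / (n² B²)` with `q_n = (1 + 1/(Bn))⁻¹`.
Since `φ(n) = o(n)`, `q_n ^ (Bφ(n) + 1) → 1`, so on the range `1 ≤ k ≤ Bφ(n)` every factor
`q_n ^ (k + 1)` is `1 + o(1)`. Summing over the `⌊Bφ(n)⌋ ~ Bφ(n)` atoms of `H(n)` gives
`P(H(n)) ~ Bφ(n) / (n² B²) = φ(n) / (n² B)`.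
-/

open Finset

section

variable {α ι : Type*} {l : Filter α}

lemma isEquivalent_sum_of_abs_sub_le {s : α → Finset ι} {a b : α → ι → ℝ}
    (hb : ∀ᶠ x in l, ∀ k ∈ s x, 0 ≤ b x k)
    (h : ∀ ε > 0, ∀ᶠ x in l, ∀ k ∈ s x, |a x k - b x k| ≤ ε * b x k) :
    (fun x => ∑ k ∈ s x, a x k) ~[l] fun x => ∑ k ∈ s x, b x k := by
  refine IsLittleO.of_bound fun ε hε => ?_
  filter_upwards [hb, h ε hε] with x hbx hx
  simp only [Pi.sub_apply, Real.norm_eq_abs, ← sum_sub_distrib]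
  calc |∑ k ∈ s x, (a x k - b x k)| ≤ ∑ k ∈ s x, |a x k - b x k| := abs_sum_le_sum_abs _ _
    _ ≤ ∑ k ∈ s x, ε * b x k := sum_le_sum hx
    _ = ε * |∑ k ∈ s x, b x k| := by rw [← mul_sum, abs_of_nonneg (sum_nonneg hbx)]

lemma isEquivalent_sum_inv_of_abs_mul_sub_one_le {s : α → Finset ι} {a D : α → ι → ℝ}
    (hD : ∀ᶠ x in l, ∀ k ∈ s x, 0 < D x k)
    (h : ∀ ε > 0, ∀ᶠ x in l, ∀ k ∈ s x, |D x k * a x k - 1| ≤ ε) :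
    (fun x => ∑ k ∈ s x, a x k) ~[l] fun x => ∑ k ∈ s x, (D x k)⁻¹ := by
  refine isEquivalent_sum_of_abs_sub_le ?_ fun ε hε => ?_
  · filter_upwards [hD] with x hx k hk using (inv_pos.2 (hx k hk)).le
  filter_upwards [hD, h ε hε] with x hDx hx k hk
  have hpos := hDx k hk
  calc |a x k - (D x k)⁻¹| = |D x k * a x k - 1| * (D x k)⁻¹ := by
        rw [← abs_of_pos (inv_pos.2 hpos), ← abs_mul, abs_of_pos (inv_pos.2 hpos)]
        congr 1
        field_simp
    _ ≤ ε * (D x k)⁻¹ := by gcongr; exact hx k hk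

lemma isEquivalent_sum_Icc_pow {q : α → ℝ} {K : α → ℕ} (hq0 : ∀ x, 0 ≤ q x)
    (hq1 : ∀ x, q x ≤ 1) (h : Tendsto (fun x => q x ^ (K x + 1)) l (𝓝 1)) :
    (fun x => ∑ k ∈ Icc 1 (K x), q x ^ (k + 1)) ~[l] fun x => (K x : ℝ) := by
  have hK : ∀ x, (K x : ℝ) = ∑ k ∈ Icc 1 (K x), (1 : ℝ) := by simp
  simp_rw [hK]
  refine isEquivalent_sum_of_abs_sub_le (.of_forall fun _ _ _ => zero_le_one) fun ε hε => ?_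
  filter_upwards [h.eventually (lt_mem_nhds (sub_lt_self 1 hε))] with x hx k hk
  have hkK : k + 1 ≤ K x + 1 := by simpa using (mem_Icc.1 hk).2
  rw [abs_sub_comm, abs_of_nonneg (sub_nonneg.2 (pow_le_one₀ (hq0 x) (hq1 x))), mul_one]
  linarith [pow_le_pow_of_le_one (hq0 x) (hq1 x) hkK]

lemma tendsto_one_add_pow_of_tendsto_mul {x : α → ℝ} {m : α → ℕ} (hx : ∀ a, 0 ≤ x a)
    (h : Tendsto (fun a => m a * x a) l (𝓝 0)) :
    Tendsto (fun a => (1 + x a) ^ m a) l (𝓝 1) := by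
  have hexp : Tendsto (fun a => exp (m a * x a)) l (𝓝 1) := by simpa using h.rexp
  refine tendsto_of_tendsto_of_tendsto_of_le_of_le tendsto_const_nhds hexp
    (fun a => one_le_pow₀ (by linarith [hx a])) fun a => ?_
  calc (1 + x a) ^ m a ≤ exp (x a) ^ m a := by
        gcongr
        · linarith [hx a]
        · linarith [add_one_le_exp (x a)]
    _ = exp (m a * x a) := (exp_nat_mul _ _).symm

end

lemma measureReal_pos_le_eq_sum {Ω : Type*} [MeasurableSpace Ω] {μ : Measure Ω}
    [IsFiniteMeasure μ] {X : Ω → ℕ} (hX : Measurable X) (c : ℝ) :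
    μ.real {ω | 0 < X ω ∧ (X ω : ℝ) ≤ c} = ∑ k ∈ Icc 1 ⌊c⌋₊, μ.real {ω | X ω = k} := by
  convert (sum_measureReal_preimage_singleton (μ := μ) (Icc 1 ⌊c⌋₊)
    fun k _ => hX (measurableSet_singleton k)).symm using 2
  · ext ω
    simp only [Set.mem_ofPred_eq, Set.mem_preimage, coe_Icc, Set.mem_Icc]
    exact and_congr_right fun h0 => (Nat.le_floor_iff' h0.ne').symm
  · rfl

lemma natCast_floor_add_one_isLittleO {c : ℕ → ℝ} (hc : c =o[atTop] fun n => (n : ℝ)) :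
    (fun n => ((⌊c n⌋₊ + 1 : ℕ) : ℝ)) =o[atTop] fun n => (n : ℝ) := by
  have hc1 : (fun n => |c n| + 1) =o[atTop] fun n => (n : ℝ) :=
    hc.abs_left.add ((isLittleO_one_left_iff ℝ).2
      (tendsto_norm_atTop_atTop.comp tendsto_natCast_atTop_atTop))
  refine IsBigO.trans_isLittleO (IsBigO.of_bound 1 (.of_forall fun n => ?_)) hc1
  rw [one_mul, Real.norm_natCast, Real.norm_of_nonneg (by positivity), Nat.cast_succ]
  gcongr
  exact (Nat.cast_le.2 (Nat.floor_le_floor (le_abs_self (c n)))).trans (Nat.floor_le (abs_nonneg _))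

lemma isEquivalent_sum_Icc_inv_one_add_pow {B : ℝ} (hB : 0 ≤ B) {K : ℕ → ℕ}
    (hK : (fun n => ((K n + 1 : ℕ) : ℝ)) =o[atTop] fun n => (n : ℝ)) :
    (fun n => ∑ k ∈ Icc 1 (K n), (1 + 1 / (B * n))⁻¹ ^ (k + 1)) ~[atTop]
      fun n => (K n : ℝ) := by
  have hmul : Tendsto (fun n => ((K n + 1 : ℕ) : ℝ) * (1 / (B * n))) atTop (𝓝 0) := by
    simpa [div_eq_mul_inv, mul_assoc, mul_comm] using (hK.tendsto_div_nhds_zero).mul_const B⁻¹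
  have hpow := tendsto_one_add_pow_of_tendsto_mul (fun n => by positivity) hmul
  refine isEquivalent_sum_Icc_pow (fun n => by positivity)
    (fun n => inv_le_one_of_one_le₀ (le_add_of_nonneg_right (by positivity))) ?_
  simpa [inv_pow] using hpow.inv₀ one_ne_zero

lemma isEquivalent_sum_of_localLimit {B C : ℝ} (hB : 0 < B) {P : ℕ → ℕ → ℝ} {K : ℕ → ℕ}
    (hLLT : ∀ ε > (0 : ℝ), ∃ N : ℕ, ∀ n ≥ N, ∀ k : ℕ, 1 ≤ k → (k : ℝ) ≤ C * n →
      |(n : ℝ) ^ 2 * B ^ 2 * (1 + 1 / (B * n)) ^ (k + 1) * P n k - 1| < ε)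
    (hK : ∀ᶠ n in atTop, (K n : ℝ) ≤ C * n) :
    (fun n => ∑ k ∈ Icc 1 (K n), P n k) ~[atTop]
      fun n => ((n : ℝ) ^ 2 * B ^ 2)⁻¹ * ∑ k ∈ Icc 1 (K n), (1 + 1 / (B * n))⁻¹ ^ (k + 1) := by
  refine (isEquivalent_sum_inv_of_abs_mul_sub_one_le
    (D := fun (n k : ℕ) => (n : ℝ) ^ 2 * B ^ 2 * (1 + 1 / (B * n)) ^ (k + 1)) ?_
    fun ε hε => ?_).congr_right (.of_forall fun n => by simp only [mul_sum, mul_inv, inv_pow])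
  · filter_upwards [eventually_gt_atTop 0] with n hn k _
    positivity
  · obtain ⟨N, hN⟩ := hLLT ε hε
    filter_upwards [eventually_ge_atTop N, hK] with n hnN hn k hk
    obtain ⟨hk1, hkK⟩ := mem_Icc.1 hk
    exact (hN n hnN k hk1 ((Nat.cast_le.2 hkK).trans hn)).le

theorem small_population_probability_general (B : ℝ) (hB : 0 < B)
    {Ω : Type*} [MeasurableSpace Ω] (μ : Measure Ω) [IsProbabilityMeasure μ]
    (Z : ℕ → Ω → ℕ) (hZm : ∀ n, Measurable (Z n))
    (φ : ℕ → ℝ) (hφ : Tendsto φ atTop atTop)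
    (hφo : (fun n : ℕ => φ n) =o[atTop] fun n : ℕ => (n : ℝ))
    (hLLT : ∀ ε > (0 : ℝ), ∀ C > (0 : ℝ), ∃ N : ℕ, ∀ n ≥ N, ∀ k : ℕ,
      1 ≤ k → (k : ℝ) ≤ C * n →
        |(n : ℝ) ^ 2 * B ^ 2 * (1 + 1 / (B * n)) ^ (k + 1) *
            (μ {ω | Z n ω = k}).toReal - 1| < ε) :
    (fun n : ℕ => (μ {ω | 0 < Z n ω ∧ (Z n ω : ℝ) ≤ B * φ n}).toReal) ~[atTop]
      fun n : ℕ => φ n / ((n : ℝ) ^ 2 * B) := by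
  have hBφ : Tendsto (fun n => B * φ n) atTop atTop := hφ.const_mul_atTop hB
  have hKo := natCast_floor_add_one_isLittleO (hφo.const_mul_left B)
  have hKn : ∀ᶠ n : ℕ in atTop, (⌊B * φ n⌋₊ : ℝ) ≤ 1 * n := by
    filter_upwards [hKo.bound one_pos] with n hn
    rw [Real.norm_natCast, Real.norm_natCast, Nat.cast_succ] at hn
    linarith
  have hatoms := isEquivalent_sum_of_localLimit hB (fun ε hε => hLLT ε hε 1 one_pos) hKn
  have hgeom := isEquivalent_sum_Icc_inv_one_add_pow hB.le hKo
  have hfloor : (fun n => (⌊B * φ n⌋₊ : ℝ)) ~[atTop] fun n => B * φ n :=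
    isEquivalent_of_tendsto_one (tendsto_nat_floor_div_atTop.comp hBφ)
  refine ((hatoms.trans (IsEquivalent.refl.mul (hgeom.trans hfloor))).congr_left
    (.of_forall fun n => (measureReal_pos_le_eq_sum (hZm n) _).symm)).congr_right
    (.of_forall fun n => ?_)
  simp only [Pi.mul_apply]
  field_simp

theorem small_population_probability    (p : ℕ → ℝ) (hp0 : ∀ k, 0 ≤ p k) (hp1 : ∑' k, p k = 1)
    (hmean : ∑' k : ℕ, (k : ℝ) * p k = 1) (B : ℝ) (hB : 0 < B)
    (hsq : Summable fun k : ℕ => (k : ℝ) ^ 2 * p k)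
    (hvar : (∑' k : ℕ, (k : ℝ) ^ 2 * p k) - 1 = 2 * B)
    (hgcd : ∀ d : ℕ, (∀ k, 0 < p k → d ∣ k) → d = 1)
    {Ω : Type*} [MeasurableSpace Ω] (μ : Measure Ω) [IsProbabilityMeasure μ]
    (Z : ℕ → Ω → ℕ) (hZm : ∀ n, Measurable (Z n))
    (hZ : ∀ n, ∀ s ∈ Set.Icc (0 : ℝ) 1, ∫ ω, s ^ Z n ω ∂μ = pgfIter p n s)
    (φ : ℕ → ℝ) (hφ : Tendsto φ atTop atTop)
    (hφo : (fun n : ℕ => φ n) =o[atTop] fun n : ℕ => (n : ℝ))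
    (hLLT : ∀ ε > (0 : ℝ), ∀ C > (0 : ℝ), ∃ N : ℕ, ∀ n ≥ N, ∀ k : ℕ,
      1 ≤ k → (k : ℝ) ≤ C * n →
        |(n : ℝ) ^ 2 * B ^ 2 * (1 + 1 / (B * n)) ^ (k + 1) *
            (μ {ω | Z n ω = k}).toReal - 1| < ε) :
    (fun n : ℕ => (μ {ω | 0 < Z n ω ∧ (Z n ω : ℝ) ≤ B * φ n}).toReal) ~[atTop]
      fun n : ℕ => φ n / ((n : ℝ) ^ 2 * B) :=
  small_population_probability_general B hB μ Z hZm φ hφ hφo hLLT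
end
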